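/- Let N be a random variable on Z₄ with pmf (1/2 − δ, 1/2, δ, 0) for δ ∈ (0, 1/4], let X₁, X₂, X₃ be binary random variables independent of N, and let Y = (X₁ ⊕₂ X₂) ⊕₄ X₃ ⊕₄ N. Then I(X₁, X₂, X₃; Y) = H(Y) − H(N) ≤ 2 − H(N), with equality if and only if X₃ = X₁ ⊕₂ X₂ with probability one and X₃ is uniform on {0,1}. -/

import Mathlib

set_option maxHeartbeats 1000000
open MeasureTheory Finset


/-- Shannon entropy (in bits) of a finitely-valued random variable. -/
noncomputable def shannonEntropy {Ω : Type*} [MeasurableSpace Ω] (μ : Measure Ω)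
    {α : Type*} [Fintype α] (X : Ω → α) : ℝ :=
  - ∑ a : α, ((μ (X ⁻¹' {a})).toReal * Real.logb 2 (μ (X ⁻¹' {a})).toReal)

/-- Mutual information `I(X;Y) = H(X) + H(Y) − H(X,Y)` (in bits). -/
noncomputable def mutualInfo {Ω : Type*} [MeasurableSpace Ω] (μ : Measure Ω)
    {α β : Type*} [Fintype α] [Fintype β] (X : Ω → α) (Y : Ω → β) : ℝ :=
  shannonEntropy μ X + shannonEntropy μ Y - shannonEntropy μ (fun ω => (X ω, Y ω))

lemma sum_zmod2 {M : Type*} [AddCommMonoid M] (g : ZMod 2 → M) :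
    ∑ d : ZMod 2, g d = g 0 + g 1 := Fin.sum_univ_two g

lemma sum_zmod4 {M : Type*} [AddCommMonoid M] (g : ZMod 4 → M) :
    ∑ d : ZMod 4, g d = g 0 + g 1 + g 2 + g 3 := Fin.sum_univ_four g

lemma meas_preimage_sum' {Ω : Type*} [MeasurableSpace Ω] (μ : Measure Ω)
    {κ β : Type*} [Fintype κ] [DecidableEq κ] [DecidableEq β]
    (Z : Ω → κ) (hZ : ∀ k, MeasurableSet (Z ⁻¹' {k})) (G : κ → β) (v : β) :
    μ ((fun ω => G (Z ω)) ⁻¹' {v}) = ∑ k : κ, if G k = v then μ (Z ⁻¹' {k}) else 0 := by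
  have hset : (fun ω => G (Z ω)) ⁻¹' {v}
      = ⋃ k ∈ Finset.univ.filter (fun k => G k = v), Z ⁻¹' {k} := by
    ext ω
    simp only [Set.mem_preimage, Set.mem_singleton_iff, Set.mem_iUnion, Finset.mem_filter,
      Finset.mem_univ, true_and]
    constructor
    · intro h; exact ⟨Z ω, h, rfl⟩
    · rintro ⟨k, hk, hω⟩; rw [hω]; exact hk
  rw [hset, measure_biUnion_finset ?_ (fun k _ => hZ k)]
  · rw [← Finset.sum_filter]
  · intro i hi j hj hij
    refine Set.disjoint_left.2 ?_
    intro ω h1 h2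
    exact hij (h1.symm.trans h2)

lemma mul_logb_mul (s t : ℝ) :
    (s * t) * Real.logb 2 (s * t)
      = t * (s * Real.logb 2 s) + s * (t * Real.logb 2 t) := by
  rcases eq_or_ne s 0 with rfl | hs
  · simp
  rcases eq_or_ne t 0 with rfl | ht
  · simp
  rw [Real.logb, Real.logb, Real.logb, Real.log_mul hs ht]
  ring

lemma ent4_le (u : ZMod 4 → ℝ) (hu : ∀ y, 0 ≤ u y) (hsum : ∑ y, u y = 1) :
    (-∑ y, u y * Real.logb 2 (u y)) ≤ 2 ∧
    ((-∑ y, u y * Real.logb 2 (u y)) = 2 ↔ ∀ y, u y = 1/4) := by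
  have hterm : ∀ y : ZMod 4, u y - 1/4 ≤ u y * Real.log (4 * u y) ∧
      (u y ≠ 1/4 → u y - 1/4 < u y * Real.log (4 * u y)) := by
    intro y
    rcases eq_or_lt_of_le (hu y) with h0 | h0
    · rw [← h0]; norm_num
    · have h4 : 0 < 4 * u y := by linarith
      have hlog : Real.log (4 * u y)⁻¹ ≤ (4 * u y)⁻¹ - 1 :=
        Real.log_le_sub_one_of_pos (by positivity)
      rw [Real.log_inv] at hlog
      constructor
      · have := mul_le_mul_of_nonneg_left hlog (le_of_lt h0)
        have hinv : u y * (4 * u y)⁻¹ = 1/4 := by field_simp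
        nlinarith [this]
      · intro hne
        have hne1 : (4 * u y)⁻¹ ≠ 1 := by
          intro h; apply hne; field_simp at h; linarith
        have hlt : Real.log (4 * u y)⁻¹ < (4 * u y)⁻¹ - 1 :=
          Real.log_lt_sub_one_of_pos (by positivity) hne1
        rw [Real.log_inv] at hlt
        have := mul_lt_mul_of_pos_left hlt h0
        have hinv : u y * (4 * u y)⁻¹ = 1/4 := by field_simp
        nlinarith [this]
  set F := ∑ y, u y * Real.log (4 * u y) with hF
  have hF0 : 0 ≤ F := by
    have : ∑ y : ZMod 4, (u y - 1/4) ≤ F :=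
      Finset.sum_le_sum (fun y _ => (hterm y).1)
    rw [Finset.sum_sub_distrib, hsum] at this
    simp only [Finset.sum_const, Finset.card_univ] at this
    have hcard : (Fintype.card (ZMod 4) : ℝ) = 4 := by norm_num [ZMod.card]
    rw [nsmul_eq_mul, hcard] at this
    linarith
  have hFiff : F = 0 ↔ ∀ y, u y = 1/4 := by
    constructor
    · intro hFz
      by_contra hc
      push_neg at hc
      obtain ⟨y0, hy0⟩ := hc
      have hlt : ∑ y : ZMod 4, (u y - 1/4) < F := by
        refine Finset.sum_lt_sum (fun y _ => (hterm y).1) ⟨y0, Finset.mem_univ _, (hterm y0).2 hy0⟩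
      rw [Finset.sum_sub_distrib, hsum, hFz] at hlt
      simp only [Finset.sum_const, Finset.card_univ, nsmul_eq_mul] at hlt
      norm_num [ZMod.card] at hlt
    · intro h
      rw [hF]
      apply Finset.sum_eq_zero
      intro y _
      rw [h y]; norm_num
  -- relate -∑ u logb u to F
  have hrel : (-∑ y, u y * Real.logb 2 (u y)) = 2 - F / Real.log 2 := by
    have hlog2 : Real.log 2 ≠ 0 := by positivity
    have expand : ∀ y : ZMod 4, u y * Real.log (4 * u y)
        = u y * Real.log 4 + (u y * Real.logb 2 (u y)) * Real.log 2 := by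
      intro y
      rcases eq_or_ne (u y) 0 with h | h
      · simp [h]
      · rw [Real.log_mul (by norm_num) h, Real.logb]
        field_simp
    have : F = (∑ y, u y) * Real.log 4 + (∑ y, u y * Real.logb 2 (u y)) * Real.log 2 := by
      rw [hF, Finset.sum_congr rfl (fun y _ => expand y), Finset.sum_add_distrib,
        ← Finset.sum_mul, ← Finset.sum_mul]
    rw [hsum] at this
    have h4 : Real.log 4 = 2 * Real.log 2 := by
      rw [show (4:ℝ) = 2^2 by norm_num, Real.log_pow]; push_cast; ring
    rw [h4] at this
    field_simp
    linarith
  rw [hrel]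
  have hlog2 : 0 < Real.log 2 := Real.log_pos (by norm_num)
  constructor
  · have : 0 ≤ F / Real.log 2 := by positivity
    linarith
  · rw [← hFiff]
    constructor
    · intro h
      have : F / Real.log 2 = 0 := by linarith
      field_simp at this
      simpa using this
    · intro h; rw [h]; simp

/-- For `Y = (X₁ ⊕₂ X₂) ⊕₄ X₃ ⊕₄ N` with `N` of pmf `(1/2 − δ, 1/2, δ, 0)` independent of
the binary inputs, `I(X₁,X₂,X₃;Y) = H(Y) − H(N) ≤ 2 − H(N)`, with equality iff
`X₃ = X₁ ⊕₂ X₂` a.s. and `X₃` is uniform. -/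
theorem stmt19 {Ω : Type*} [MeasurableSpace Ω] (μ : Measure Ω) [IsProbabilityMeasure μ]
    (δ : ℝ) (hδ0 : 0 < δ) (hδ : δ ≤ 1/4)
    (X₁ X₂ X₃ : Ω → ZMod 2) (N : Ω → ZMod 4)
    (h₁m : ∀ a, MeasurableSet (X₁ ⁻¹' {a}))
    (h₂m : ∀ a, MeasurableSet (X₂ ⁻¹' {a}))
    (h₃m : ∀ a, MeasurableSet (X₃ ⁻¹' {a}))
    (hNm : ∀ d, MeasurableSet (N ⁻¹' {d}))
    (hN0 : μ (N ⁻¹' {0}) = ENNReal.ofReal (1/2 - δ))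
    (hN1 : μ (N ⁻¹' {1}) = ENNReal.ofReal (1/2))
    (hN2 : μ (N ⁻¹' {2}) = ENNReal.ofReal δ)
    (hN3 : μ (N ⁻¹' {3}) = 0)
    (hindep : ∀ (a b c : ZMod 2) (d : ZMod 4),
      μ (X₁ ⁻¹' {a} ∩ X₂ ⁻¹' {b} ∩ X₃ ⁻¹' {c} ∩ N ⁻¹' {d}) =
        μ (X₁ ⁻¹' {a} ∩ X₂ ⁻¹' {b} ∩ X₃ ⁻¹' {c}) * μ (N ⁻¹' {d}))
    (Y : Ω → ZMod 4)
    (hY : ∀ ω, Y ω = (((X₁ ω + X₂ ω : ZMod 2).val : ZMod 4))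
        + (((X₃ ω).val : ZMod 4)) + N ω) :
    mutualInfo μ (fun ω => (X₁ ω, X₂ ω, X₃ ω)) Y
        = shannonEntropy μ Y - shannonEntropy μ N ∧
    mutualInfo μ (fun ω => (X₁ ω, X₂ ω, X₃ ω)) Y ≤ 2 - shannonEntropy μ N ∧
    (mutualInfo μ (fun ω => (X₁ ω, X₂ ω, X₃ ω)) Y = 2 - shannonEntropy μ N ↔
      (μ {ω | X₃ ω = X₁ ω + X₂ ω} = 1 ∧ ∀ b : ZMod 2, μ (X₃ ⁻¹' {b}) = 2⁻¹)) := by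
  classical
  -- named function f and its defining equation
  obtain ⟨f, hfdef⟩ : ∃ f : ZMod 2 × ZMod 2 × ZMod 2 → ZMod 4,
      ∀ x, f x = (((x.1 + x.2.1 : ZMod 2).val : ZMod 4)) + (((x.2.2 : ZMod 2)).val : ZMod 4) :=
    ⟨_, fun _ => rfl⟩
  -- triple preimage facts
  have htri : ∀ x : ZMod 2 × ZMod 2 × ZMod 2,
      (fun ω => (X₁ ω, X₂ ω, X₃ ω)) ⁻¹' {x}
        = X₁ ⁻¹' {x.1} ∩ X₂ ⁻¹' {x.2.1} ∩ X₃ ⁻¹' {x.2.2} := by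
    intro x; ext ω
    simp [Prod.ext_iff, and_assoc]
  have htrim : ∀ x : ZMod 2 × ZMod 2 × ZMod 2,
      MeasurableSet ((fun ω => (X₁ ω, X₂ ω, X₃ ω)) ⁻¹' {x}) := by
    intro x; rw [htri]; exact ((h₁m _).inter (h₂m _)).inter (h₃m _)
  -- machinery over the triple
  have hmach : ∀ {β : Type} [DecidableEq β] (G : (ZMod 2 × ZMod 2 × ZMod 2) → β) (v : β),
      μ ((fun ω => G (X₁ ω, X₂ ω, X₃ ω)) ⁻¹' {v})
        = ∑ x : ZMod 2 × ZMod 2 × ZMod 2, if G x = v then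
            μ (X₁ ⁻¹' {x.1} ∩ X₂ ⁻¹' {x.2.1} ∩ X₃ ⁻¹' {x.2.2}) else 0 := by
    intro β _ G v
    have h := meas_preimage_sum' μ (fun ω => (X₁ ω, X₂ ω, X₃ ω)) htrim G v
    simp only [htri] at h
    exact h
  -- machinery over the joint (triple, N)
  have hZmeas : ∀ k : (ZMod 2 × ZMod 2 × ZMod 2) × ZMod 4,
      MeasurableSet ((fun ω => ((X₁ ω, X₂ ω, X₃ ω), N ω)) ⁻¹' {k}) := by
    intro k
    have : (fun ω => ((X₁ ω, X₂ ω, X₃ ω), N ω)) ⁻¹' {k}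
        = X₁ ⁻¹' {k.1.1} ∩ X₂ ⁻¹' {k.1.2.1} ∩ X₃ ⁻¹' {k.1.2.2} ∩ N ⁻¹' {k.2} := by
      ext ω; simp [Prod.ext_iff, and_assoc]
    rw [this]
    exact (((h₁m _).inter (h₂m _)).inter (h₃m _)).inter (hNm _)
  have hZval : ∀ k : (ZMod 2 × ZMod 2 × ZMod 2) × ZMod 4,
      μ ((fun ω => ((X₁ ω, X₂ ω, X₃ ω), N ω)) ⁻¹' {k})
        = μ (X₁ ⁻¹' {k.1.1} ∩ X₂ ⁻¹' {k.1.2.1} ∩ X₃ ⁻¹' {k.1.2.2}) * μ (N ⁻¹' {k.2}) := by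
    intro k
    have hs : (fun ω => ((X₁ ω, X₂ ω, X₃ ω), N ω)) ⁻¹' {k}
        = X₁ ⁻¹' {k.1.1} ∩ X₂ ⁻¹' {k.1.2.1} ∩ X₃ ⁻¹' {k.1.2.2} ∩ N ⁻¹' {k.2} := by
      ext ω; simp [Prod.ext_iff, and_assoc]
    rw [hs, hindep]
  have hmach2 : ∀ {β : Type} [DecidableEq β]
      (G : (ZMod 2 × ZMod 2 × ZMod 2) × ZMod 4 → β) (v : β),
      μ ((fun ω => G ((X₁ ω, X₂ ω, X₃ ω), N ω)) ⁻¹' {v})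
        = ∑ k : (ZMod 2 × ZMod 2 × ZMod 2) × ZMod 4, if G k = v then
            μ (X₁ ⁻¹' {k.1.1} ∩ X₂ ⁻¹' {k.1.2.1} ∩ X₃ ⁻¹' {k.1.2.2}) * μ (N ⁻¹' {k.2}) else 0 := by
    intro β _ G v
    have h := meas_preimage_sum' μ (fun ω => ((X₁ ω, X₂ ω, X₃ ω), N ω)) hZmeas G v
    simp only [hZval] at h
    exact h
  -- real-valued pmfs
  obtain ⟨p, hp⟩ : ∃ p : ZMod 2 × ZMod 2 × ZMod 2 → ℝ,
      ∀ x, p x = (μ (X₁ ⁻¹' {x.1} ∩ X₂ ⁻¹' {x.2.1} ∩ X₃ ⁻¹' {x.2.2})).toReal :=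
    ⟨_, fun _ => rfl⟩
  obtain ⟨q, hq⟩ : ∃ q : ZMod 4 → ℝ, ∀ d, q d = (μ (N ⁻¹' {d})).toReal := ⟨_, fun _ => rfl⟩
  obtain ⟨u, hu⟩ : ∃ u : ZMod 4 → ℝ, ∀ y, u y = (μ (Y ⁻¹' {y})).toReal := ⟨_, fun _ => rfl⟩
  have hpnn : ∀ x, 0 ≤ p x := fun x => by rw [hp]; exact ENNReal.toReal_nonneg
  -- ENNReal sums to one
  have hPsum : ∑ x : ZMod 2 × ZMod 2 × ZMod 2,
      μ (X₁ ⁻¹' {x.1} ∩ X₂ ⁻¹' {x.2.1} ∩ X₃ ⁻¹' {x.2.2}) = 1 := by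
    have hU : ((fun ω => (fun _ : ZMod 2 × ZMod 2 × ZMod 2 => (0 : Fin 1)) (X₁ ω, X₂ ω, X₃ ω))
        ⁻¹' {0}) = Set.univ := by
      ext ω; simp
    have h := hmach (fun _ : ZMod 2 × ZMod 2 × ZMod 2 => (0 : Fin 1)) 0
    rw [hU, measure_univ] at h
    simpa using h.symm
  have hpsum : ∑ x : ZMod 2 × ZMod 2 × ZMod 2, p x = 1 := by
    have h := congrArg ENNReal.toReal hPsum
    rw [ENNReal.toReal_sum (fun a _ => measure_ne_top μ _)] at h
    simpa [← hp] using h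
  -- Y measure formula
  have hYset : ∀ y : ZMod 4, Y ⁻¹' {y}
      = (fun ω => ((fun k : (ZMod 2 × ZMod 2 × ZMod 2) × ZMod 4 => f k.1 + k.2)
          ((X₁ ω, X₂ ω, X₃ ω), N ω))) ⁻¹' {y} := by
    intro y; ext ω
    simp only [Set.mem_preimage, Set.mem_singleton_iff, hY ω, hfdef, add_assoc]
  have hY_meas : ∀ y : ZMod 4, μ (Y ⁻¹' {y}) = ∑ x : ZMod 2 × ZMod 2 × ZMod 2,
      μ (X₁ ⁻¹' {x.1} ∩ X₂ ⁻¹' {x.2.1} ∩ X₃ ⁻¹' {x.2.2}) * μ (N ⁻¹' {y - f x}) := by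
    intro y
    rw [hYset y, hmach2 (fun k => f k.1 + k.2) y, Fintype.sum_prod_type]
    refine Finset.sum_congr rfl fun x _ => ?_
    have hcond : ∀ d : ZMod 4, (f x + d = y) ↔ (d = y - f x) := by
      intro d
      constructor
      · intro h; rw [← h]; ring
      · intro h; rw [h]; ring
    simp only [hcond]
    rw [Finset.sum_ite_eq' Finset.univ (y - f x)
      (fun d => μ (X₁ ⁻¹' {x.1} ∩ X₂ ⁻¹' {x.2.1} ∩ X₃ ⁻¹' {x.2.2}) * μ (N ⁻¹' {d}))]
    simp
  have hu_form : ∀ y : ZMod 4, u y = ∑ x : ZMod 2 × ZMod 2 × ZMod 2, p x * q (y - f x) := by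
    intro y
    rw [hu, hY_meas y, ENNReal.toReal_sum
      (fun x _ => ENNReal.mul_ne_top (measure_ne_top μ _) (measure_ne_top μ _))]
    exact Finset.sum_congr rfl fun x _ => by rw [ENNReal.toReal_mul, hp, hq]
  -- Q sums
  have hQsum : ∑ d : ZMod 4, μ (N ⁻¹' {d}) = 1 := by
    rw [sum_zmod4, hN0, hN1, hN2, hN3, add_zero,
      ← ENNReal.ofReal_add (by linarith) (by norm_num),
      ← ENNReal.ofReal_add (by linarith) (le_of_lt hδ0),
      show 1/2 - δ + 1/2 + δ = 1 by ring]
    exact ENNReal.ofReal_one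
  have husum : ∑ y : ZMod 4, u y = 1 := by
    have hE : ∑ y : ZMod 4, μ (Y ⁻¹' {y}) = 1 := by
      calc ∑ y : ZMod 4, μ (Y ⁻¹' {y})
          = ∑ y : ZMod 4, ∑ x : ZMod 2 × ZMod 2 × ZMod 2,
            μ (X₁ ⁻¹' {x.1} ∩ X₂ ⁻¹' {x.2.1} ∩ X₃ ⁻¹' {x.2.2}) * μ (N ⁻¹' {y - f x}) :=
            Finset.sum_congr rfl fun y _ => hY_meas y
        _ = ∑ x : ZMod 2 × ZMod 2 × ZMod 2, ∑ y : ZMod 4,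
            μ (X₁ ⁻¹' {x.1} ∩ X₂ ⁻¹' {x.2.1} ∩ X₃ ⁻¹' {x.2.2}) * μ (N ⁻¹' {y - f x}) :=
            Finset.sum_comm
        _ = ∑ x : ZMod 2 × ZMod 2 × ZMod 2,
            μ (X₁ ⁻¹' {x.1} ∩ X₂ ⁻¹' {x.2.1} ∩ X₃ ⁻¹' {x.2.2}) * ∑ y : ZMod 4, μ (N ⁻¹' {y - f x}) := by
            simp [Finset.mul_sum]
        _ = ∑ x : ZMod 2 × ZMod 2 × ZMod 2,
            μ (X₁ ⁻¹' {x.1} ∩ X₂ ⁻¹' {x.2.1} ∩ X₃ ⁻¹' {x.2.2}) * 1 := by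
            refine Finset.sum_congr rfl fun x _ => ?_
            congr 1
            rw [← hQsum]
            exact Fintype.sum_equiv (Equiv.subRight (f x)) _ _ (fun y => by simp [Equiv.subRight])
        _ = 1 := by simpa using hPsum
    have h := congrArg ENNReal.toReal hE
    rw [ENNReal.toReal_sum (fun a _ => measure_ne_top μ _)] at h
    simpa [← hu] using h
  -- pair measure
  have hpair : ∀ (x : ZMod 2 × ZMod 2 × ZMod 2) (y : ZMod 4),
      μ ((fun ω => ((X₁ ω, X₂ ω, X₃ ω), Y ω)) ⁻¹' {(x, y)})
        = μ (X₁ ⁻¹' {x.1} ∩ X₂ ⁻¹' {x.2.1} ∩ X₃ ⁻¹' {x.2.2}) * μ (N ⁻¹' {y - f x}) := by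
    intro x y
    obtain ⟨a, b, c⟩ := x
    have hset : (fun ω => ((X₁ ω, X₂ ω, X₃ ω), Y ω)) ⁻¹' {((a, b, c), y)}
        = X₁ ⁻¹' {a} ∩ X₂ ⁻¹' {b} ∩ X₃ ⁻¹' {c} ∩ N ⁻¹' {y - f (a, b, c)} := by
      ext ω
      simp only [Set.mem_preimage, Set.mem_singleton_iff, Prod.mk.injEq, Set.mem_inter_iff,
        hY ω, hfdef]
      constructor
      · rintro ⟨⟨h1, h2, h3⟩, h4⟩
        refine ⟨⟨⟨h1, h2⟩, h3⟩, ?_⟩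
        rw [h1, h2, h3] at h4
        rw [← h4]
        ring
      · rintro ⟨⟨⟨h1, h2⟩, h3⟩, h4⟩
        refine ⟨⟨h1, h2, h3⟩, ?_⟩
        rw [h1, h2, h3, h4]
        ring
    rw [hset, hindep]
  -- entropy of the pair
  have hHpair : shannonEntropy μ (fun ω => ((X₁ ω, X₂ ω, X₃ ω), Y ω))
      = shannonEntropy μ (fun ω => (X₁ ω, X₂ ω, X₃ ω)) + shannonEntropy μ N := by
    simp only [shannonEntropy, htri, ← hp, ← hq]
    rw [Fintype.sum_prod_type]
    have step : ∀ x : ZMod 2 × ZMod 2 × ZMod 2,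
        (∑ y : ZMod 4, (μ ((fun ω => ((X₁ ω, X₂ ω, X₃ ω), Y ω)) ⁻¹' {(x, y)})).toReal
            * Real.logb 2 (μ ((fun ω => ((X₁ ω, X₂ ω, X₃ ω), Y ω)) ⁻¹' {(x, y)})).toReal)
        = ∑ d : ZMod 4, (q d * (p x * Real.logb 2 (p x)) + p x * (q d * Real.logb 2 (q d))) := by
      intro x
      have e1 : ∀ y : ZMod 4,
          (μ ((fun ω => ((X₁ ω, X₂ ω, X₃ ω), Y ω)) ⁻¹' {(x, y)})).toReal = p x * q (y - f x) :=
        fun y => by rw [hpair x y, ENNReal.toReal_mul, ← hp, ← hq]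
      calc (∑ y : ZMod 4, (μ ((fun ω => ((X₁ ω, X₂ ω, X₃ ω), Y ω)) ⁻¹' {(x, y)})).toReal
            * Real.logb 2 (μ ((fun ω => ((X₁ ω, X₂ ω, X₃ ω), Y ω)) ⁻¹' {(x, y)})).toReal)
          = ∑ y : ZMod 4, (p x * q (y - f x)) * Real.logb 2 (p x * q (y - f x)) :=
            Finset.sum_congr rfl fun y _ => by rw [e1 y]
        _ = ∑ d : ZMod 4, (p x * q d) * Real.logb 2 (p x * q d) :=
            Fintype.sum_equiv (Equiv.subRight (f x)) _ _ (fun y => by simp [Equiv.subRight])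
        _ = _ := Finset.sum_congr rfl fun d _ => mul_logb_mul (p x) (q d)
    rw [Finset.sum_congr rfl fun x _ => step x]
    have hqsumr : ∑ d : ZMod 4, q d = 1 := by
      have h := congrArg ENNReal.toReal hQsum
      rw [ENNReal.toReal_sum (fun a _ => measure_ne_top μ _)] at h
      simpa [← hq] using h
    have inner : ∀ x : ZMod 2 × ZMod 2 × ZMod 2,
        ∑ d : ZMod 4, (q d * (p x * Real.logb 2 (p x)) + p x * (q d * Real.logb 2 (q d)))
          = (p x * Real.logb 2 (p x)) + p x * (∑ d : ZMod 4, q d * Real.logb 2 (q d)) := by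
      intro x
      rw [Finset.sum_add_distrib, ← Finset.sum_mul, ← Finset.mul_sum, hqsumr, one_mul]
    rw [Finset.sum_congr rfl fun x _ => inner x, Finset.sum_add_distrib, ← Finset.sum_mul,
      hpsum, one_mul]
    ring
  -- part 1
  have part1 : mutualInfo μ (fun ω => (X₁ ω, X₂ ω, X₃ ω)) Y
      = shannonEntropy μ Y - shannonEntropy μ N := by
    simp only [mutualInfo]
    rw [hHpair]
    ring
  -- entropy of Y analysis
  have hHY : shannonEntropy μ Y = -∑ y : ZMod 4, u y * Real.logb 2 (u y) := by
    simp only [shannonEntropy, ← hu]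
  obtain ⟨hle2, hiff2⟩ := ent4_le u (fun y => by rw [hu]; exact ENNReal.toReal_nonneg) husum
  rw [← hHY] at hle2 hiff2
  -- f values
  have hf000 : f (0,0,0) = 0 := by rw [hfdef]; decide
  have hf001 : f (0,0,1) = 1 := by rw [hfdef]; decide
  have hf010 : f (0,1,0) = 1 := by rw [hfdef]; decide
  have hf011 : f (0,1,1) = 2 := by rw [hfdef]; decide
  have hf100 : f (1,0,0) = 1 := by rw [hfdef]; decide
  have hf101 : f (1,0,1) = 2 := by rw [hfdef]; decide
  have hf110 : f (1,1,0) = 0 := by rw [hfdef]; decide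
  have hf111 : f (1,1,1) = 1 := by rw [hfdef]; decide
  -- q values
  have hqv0 : q 0 = 1/2 - δ := by
    rw [hq, hN0, ENNReal.toReal_ofReal (by linarith)]
  have hqv1 : q 1 = 1/2 := by
    rw [hq, hN1, ENNReal.toReal_ofReal (by norm_num)]
  have hqv2 : q 2 = δ := by
    rw [hq, hN2, ENNReal.toReal_ofReal (le_of_lt hδ0)]
  have hqv3 : q 3 = 0 := by rw [hq, hN3]; simp
  -- expansion helper (reals)
  have hexp : ∀ g : ZMod 2 × ZMod 2 × ZMod 2 → ℝ, (∑ x : ZMod 2 × ZMod 2 × ZMod 2, g x)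
      = g (0,0,0) + g (0,0,1) + g (0,1,0) + g (0,1,1)
        + g (1,0,0) + g (1,0,1) + g (1,1,0) + g (1,1,1) := by
    intro g
    simp only [Fintype.sum_prod_type, sum_zmod2]
    ring
  -- explicit u formulas
  have hu_0 : u 0 = (p (0,0,0) + p (1,1,0)) * (1/2 - δ) + (p (0,1,1) + p (1,0,1)) * δ := by
    rw [hu_form 0, hexp (fun x => p x * q (0 - f x))]
    simp only [hf000, hf001, hf010, hf011, hf100, hf101, hf110, hf111,
      show (0:ZMod 4) - 0 = 0 from by decide, show (0:ZMod 4) - 1 = 3 from by decide,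
      show (0:ZMod 4) - 2 = 2 from by decide, hqv0, hqv2, hqv3]
    ring
  have hu_1 : u 1 = (p (0,0,0) + p (1,1,0)) * (1/2)
      + (p (0,0,1) + p (0,1,0) + p (1,0,0) + p (1,1,1)) * (1/2 - δ) := by
    rw [hu_form 1, hexp (fun x => p x * q (1 - f x))]
    simp only [hf000, hf001, hf010, hf011, hf100, hf101, hf110, hf111,
      show (1:ZMod 4) - 0 = 1 from by decide, show (1:ZMod 4) - 1 = 0 from by decide,
      show (1:ZMod 4) - 2 = 3 from by decide, hqv0, hqv1, hqv3]
    ring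
  have hu_2 : u 2 = (p (0,0,0) + p (1,1,0)) * δ
      + (p (0,0,1) + p (0,1,0) + p (1,0,0) + p (1,1,1)) * (1/2)
      + (p (0,1,1) + p (1,0,1)) * (1/2 - δ) := by
    rw [hu_form 2, hexp (fun x => p x * q (2 - f x))]
    simp only [hf000, hf001, hf010, hf011, hf100, hf101, hf110, hf111,
      show (2:ZMod 4) - 0 = 2 from by decide, show (2:ZMod 4) - 1 = 1 from by decide,
      show (2:ZMod 4) - 2 = 0 from by decide, hqv0, hqv1, hqv2]
    ring
  have hu_3 : u 3 = (p (0,0,1) + p (0,1,0) + p (1,0,0) + p (1,1,1)) * δ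
      + (p (0,1,1) + p (1,0,1)) * (1/2) := by
    rw [hu_form 3, hexp (fun x => p x * q (3 - f x))]
    simp only [hf000, hf001, hf010, hf011, hf100, hf101, hf110, hf111,
      show (3:ZMod 4) - 0 = 3 from by decide, show (3:ZMod 4) - 1 = 2 from by decide,
      show (3:ZMod 4) - 2 = 1 from by decide, hqv1, hqv2, hqv3]
    ring
  have hsum8 : p (0,0,0) + p (0,0,1) + p (0,1,0) + p (0,1,1)
      + p (1,0,0) + p (1,0,1) + p (1,1,0) + p (1,1,1) = 1 := by
    rw [← hexp p]; exact hpsum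
  -- ofReal form of P
  have hPof : ∀ a b c : ZMod 2, μ (X₁ ⁻¹' {a} ∩ X₂ ⁻¹' {b} ∩ X₃ ⁻¹' {c})
      = ENNReal.ofReal (p (a, b, c)) := by
    intro a b c
    rw [hp]
    exact (ENNReal.ofReal_toReal (measure_ne_top μ _)).symm
  have hb2 : ∀ z : ZMod 2, z = 0 ∨ z = 1 := by decide
  have hy4 : ∀ z : ZMod 4, z = 0 ∨ z = 1 ∨ z = 2 ∨ z = 3 := by decide
  have hhalf : ENNReal.ofReal (1/2 : ℝ) = 2⁻¹ := by
    rw [show (1/2:ℝ) = (2:ℝ)⁻¹ by norm_num, ENNReal.ofReal_inv_of_pos (by norm_num)]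
    norm_num
  have hoadd : ∀ a b c d : ℝ, 0 ≤ a → 0 ≤ b → 0 ≤ c → 0 ≤ d →
      ENNReal.ofReal a + ENNReal.ofReal b + (ENNReal.ofReal c + ENNReal.ofReal d)
        = ENNReal.ofReal (a + b + c + d) := by
    intro a b c d ha hb hc hd
    rw [← ENNReal.ofReal_add ha hb, ← ENNReal.ofReal_add hc hd,
      ← ENNReal.ofReal_add (add_nonneg ha hb) (add_nonneg hc hd)]
    congr 1
    ring
  -- measure of the condition events
  have hAmeas : μ {ω | X₃ ω = X₁ ω + X₂ ω}
      = ENNReal.ofReal (p (0,0,0) + p (0,1,1) + p (1,0,1) + p (1,1,0)) := by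
    have hAevent : {ω | X₃ ω = X₁ ω + X₂ ω}
        = (fun ω => (fun x : ZMod 2 × ZMod 2 × ZMod 2 => x.2.2 - (x.1 + x.2.1))
            (X₁ ω, X₂ ω, X₃ ω)) ⁻¹' {0} := by
      ext ω; simp [sub_eq_zero]
    rw [hAevent, hmach (fun x : ZMod 2 × ZMod 2 × ZMod 2 => x.2.2 - (x.1 + x.2.1)) 0]
    simp only [Fintype.sum_prod_type, sum_zmod2]
    simp (config := { decide := true }) only [if_true, if_false, add_zero, zero_add]
    rw [hPof 0 0 0, hPof 0 1 1, hPof 1 0 1, hPof 1 1 0]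
    exact hoadd _ _ _ _ (hpnn _) (hpnn _) (hpnn _) (hpnn _)
  have hX3meas : ∀ b : ZMod 2, μ (X₃ ⁻¹' {b})
      = ENNReal.ofReal (p (0,0,b) + p (0,1,b) + p (1,0,b) + p (1,1,b)) := by
    intro b
    have hset : X₃ ⁻¹' {b} = (fun ω => (fun x : ZMod 2 × ZMod 2 × ZMod 2 => x.2.2)
        (X₁ ω, X₂ ω, X₃ ω)) ⁻¹' {b} := rfl
    rw [hset, hmach (fun x : ZMod 2 × ZMod 2 × ZMod 2 => x.2.2) b]
    rcases hb2 b with rfl | rfl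
    · simp only [Fintype.sum_prod_type, sum_zmod2]
      simp (config := { decide := true }) only [if_true, if_false, add_zero, zero_add]
      rw [hPof 0 0 0, hPof 0 1 0, hPof 1 0 0, hPof 1 1 0]
      exact hoadd _ _ _ _ (hpnn _) (hpnn _) (hpnn _) (hpnn _)
    · simp only [Fintype.sum_prod_type, sum_zmod2]
      simp (config := { decide := true }) only [if_true, if_false, add_zero, zero_add]
      rw [hPof 0 0 1, hPof 0 1 1, hPof 1 0 1, hPof 1 1 1]
      exact hoadd _ _ _ _ (hpnn _) (hpnn _) (hpnn _) (hpnn _)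
  -- the main equivalence in real terms
  have hiff3 : (∀ y : ZMod 4, u y = 1/4) ↔
      (μ {ω | X₃ ω = X₁ ω + X₂ ω} = 1 ∧ ∀ b : ZMod 2, μ (X₃ ⁻¹' {b}) = 2⁻¹) := by
    constructor
    · intro huni
      have h0 := huni 0; rw [hu_0] at h0
      have h1 := huni 1; rw [hu_1] at h1
      have key : (p (0,0,1) + p (0,1,0) + p (1,0,0) + p (1,1,1)) * (1/2 - 2*δ + 4*δ^2) = 0 := by
        linear_combination (-1 : ℝ) * h0 + (1 - 4*δ) * h1 + δ * hsum8
      have hpos : (0:ℝ) < 1/2 - 2*δ + 4*δ^2 := by nlinarith [sq_nonneg (4*δ - 1)]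
      have hr1 : p (0,0,1) + p (0,1,0) + p (1,0,0) + p (1,1,1) = 0 := by
        rcases mul_eq_zero.mp key with h | h
        · exact h
        · linarith
      have hz1 : p (0,0,1) = 0 := by
        linarith [hpnn (0,0,1), hpnn (0,1,0), hpnn (1,0,0), hpnn (1,1,1)]
      have hz2 : p (0,1,0) = 0 := by
        linarith [hpnn (0,0,1), hpnn (0,1,0), hpnn (1,0,0), hpnn (1,1,1)]
      have hz3 : p (1,0,0) = 0 := by
        linarith [hpnn (0,0,1), hpnn (0,1,0), hpnn (1,0,0), hpnn (1,1,1)]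
      have hz4 : p (1,1,1) = 0 := by
        linarith [hpnn (0,0,1), hpnn (0,1,0), hpnn (1,0,0), hpnn (1,1,1)]
      have hr0 : p (0,0,0) + p (1,1,0) = 1/2 := by
        rw [hz1, hz2, hz3, hz4] at h1; linarith
      have hr2 : p (0,1,1) + p (1,0,1) = 1/2 := by linarith
      constructor
      · rw [hAmeas, show p (0,0,0) + p (0,1,1) + p (1,0,1) + p (1,1,0) = 1 by linarith]
        exact ENNReal.ofReal_one
      · intro b
        rcases hb2 b with rfl | rfl
        · rw [hX3meas 0,
            show p (0,0,0) + p (0,1,0) + p (1,0,0) + p (1,1,0) = 1/2 by linarith]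
          exact hhalf
        · rw [hX3meas 1,
            show p (0,0,1) + p (0,1,1) + p (1,0,1) + p (1,1,1) = 1/2 by linarith]
          exact hhalf
    · rintro ⟨hA, hB⟩
      have hAr : p (0,0,0) + p (0,1,1) + p (1,0,1) + p (1,1,0) = 1 := by
        rw [hAmeas] at hA
        have h2 := congrArg ENNReal.toReal hA
        rw [ENNReal.toReal_ofReal (add_nonneg (add_nonneg (add_nonneg (hpnn _) (hpnn _)) (hpnn _)) (hpnn _))] at h2
        simpa using h2
      have hB0r : p (0,0,0) + p (0,1,0) + p (1,0,0) + p (1,1,0) = 1/2 := by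
        have hA0 := hB 0
        rw [hX3meas 0] at hA0
        have h2 := congrArg ENNReal.toReal hA0
        rw [ENNReal.toReal_ofReal (add_nonneg (add_nonneg (add_nonneg (hpnn _) (hpnn _)) (hpnn _)) (hpnn _))] at h2
        simpa using h2
      have hB1r : p (0,0,1) + p (0,1,1) + p (1,0,1) + p (1,1,1) = 1/2 := by
        have hA1 := hB 1
        rw [hX3meas 1] at hA1
        have h2 := congrArg ENNReal.toReal hA1
        rw [ENNReal.toReal_ofReal (add_nonneg (add_nonneg (add_nonneg (hpnn _) (hpnn _)) (hpnn _)) (hpnn _))] at h2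
        simpa using h2
      have hz1 : p (0,0,1) = 0 := by
        linarith [hpnn (0,0,1), hpnn (0,1,0), hpnn (1,0,0), hpnn (1,1,1)]
      have hz2 : p (0,1,0) = 0 := by
        linarith [hpnn (0,0,1), hpnn (0,1,0), hpnn (1,0,0), hpnn (1,1,1)]
      have hz3 : p (1,0,0) = 0 := by
        linarith [hpnn (0,0,1), hpnn (0,1,0), hpnn (1,0,0), hpnn (1,1,1)]
      have hz4 : p (1,1,1) = 0 := by
        linarith [hpnn (0,0,1), hpnn (0,1,0), hpnn (1,0,0), hpnn (1,1,1)]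
      have hr0 : p (0,0,0) + p (1,1,0) = 1/2 := by linarith
      have hr2 : p (0,1,1) + p (1,0,1) = 1/2 := by linarith
      intro y
      rcases hy4 y with rfl | rfl | rfl | rfl
      · rw [hu_0]; linear_combination (1/2 - δ) * hr0 + δ * hr2
      · rw [hu_1, hz1, hz2, hz3, hz4]; linear_combination (1/2 : ℝ) * hr0
      · rw [hu_2, hz1, hz2, hz3, hz4]
        linear_combination δ * hr0 + (1/2 - δ) * hr2
      · rw [hu_3, hz1, hz2, hz3, hz4]; linear_combination (1/2 : ℝ) * hr2
  refine ⟨part1, ?_, ?_⟩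
  · rw [part1]
    linarith
  · rw [part1]
    constructor
    · intro h
      exact hiff3.mp (hiff2.mp (by linarith))
    · intro hC
      have h2 : shannonEntropy μ Y = 2 := hiff2.mpr (hiff3.mpr hC)
      rw [h2]
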